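/- Let S be an inverse semigroup and l : S → [0,∞) a length function. Define d(s,t) := l(ts*) if s*s = t*t, and d(s,t) := ∞ otherwise. Then d is an extended metric on S that is right subinvariant: d(sx, tx) ≤ d(s,t) for all s,t,x ∈ S. -/

import Mathlib

open scoped ENNReal NNReal

/-!
Inverses in an inverse semigroup are unique, which gives `s** = s`, `(st)* = t*s*` and `e* = e`
for idempotents `e`. Reflexivity: if `ts*` is idempotent and `s*s = t*t`, then `ts*` is
self-adjoint, so `ts*` maps `s` to `t` and `t` to `s`, and idempotence forces `s = t`. Symmetry is
`l(s t*) = l((t s*)*)`. The triangle inequality comes from `u s* = (u t*)(t s*)` when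
`s*s = t*t`, and right subinvariance from `(tx)(sx)* = (t s*)((sx)(sx)*)`, a product with an
idempotent, which has length `0`.
-/

/-- `S` is an inverse semigroup with inversion `star`. -/
structure IsInverseStar {S : Type*} [Semigroup S] (star : S → S) : Prop where
  mul_star_mul : ∀ s, s * star s * s = s
  star_mul_star : ∀ s, star s * s * star s = star s
  idem_comm : ∀ e f : S, IsIdempotentElem e → IsIdempotentElem f → Commute e f

section Semigroup

variable {S : Type*} [Semigroup S]

theorem isIdempotentElem_mul_of_mul_mul_eq_self {a b : S} (h : a * b * a = a) :
    IsIdempotentElem (a * b) := by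
  calc a * b * (a * b) = a * b * a * b := by simp only [mul_assoc]
    _ = a * b := by rw [h]

theorem eq_of_isInverse_of_idem_comm
    (hcomm : ∀ e f : S, IsIdempotentElem e → IsIdempotentElem f → Commute e f)
    {a x y : S} (hax : a * x * a = a) (hxa : x * a * x = x)
    (hay : a * y * a = a) (hya : y * a * y = y) : x = y := by
  have hx : x = y * a * x :=
    calc x = x * a * x := hxa.symm
      _ = x * (a * y * a) * x := by rw [hay]
      _ = x * a * (y * a) * x := by simp only [mul_assoc]
      _ = y * a * (x * a) * x := by
        rw [(hcomm _ _ (isIdempotentElem_mul_of_mul_mul_eq_self hxa)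
          (isIdempotentElem_mul_of_mul_mul_eq_self hya)).eq]
      _ = y * a * x := by rw [mul_assoc (y * a), hxa]
  have hy : y = y * a * x :=
    calc y = y * a * y := hya.symm
      _ = y * (a * x * a) * y := by rw [hax]
      _ = y * (a * x) * (a * y) := by simp only [mul_assoc]
      _ = y * (a * y) * (a * x) := by
        rw [mul_assoc y, (hcomm _ _ (isIdempotentElem_mul_of_mul_mul_eq_self hax)
          (isIdempotentElem_mul_of_mul_mul_eq_self hay)).eq, ← mul_assoc]
      _ = y * a * x := by rw [← mul_assoc y, hya, mul_assoc]
  rw [hx, ← hy]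

end Semigroup

namespace IsInverseStar

variable {S : Type*} [Semigroup S] {star : S → S}

theorem eq_star (h : IsInverseStar star) {a x : S} (hax : a * x * a = a) (hxa : x * a * x = x) :
    x = star a :=
  eq_of_isInverse_of_idem_comm h.idem_comm hax hxa (h.mul_star_mul a) (h.star_mul_star a)

theorem isIdempotentElem_mul_star (h : IsInverseStar star) (s : S) :
    IsIdempotentElem (s * star s) :=
  isIdempotentElem_mul_of_mul_mul_eq_self (h.mul_star_mul s)

theorem isIdempotentElem_star_mul (h : IsInverseStar star) (s : S) :
    IsIdempotentElem (star s * s) :=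
  isIdempotentElem_mul_of_mul_mul_eq_self (h.star_mul_star s)

theorem star_star (h : IsInverseStar star) (s : S) : star (star s) = s :=
  (h.eq_star (h.star_mul_star s) (h.mul_star_mul s)).symm

theorem star_eq_self (h : IsInverseStar star) {e : S} (he : IsIdempotentElem e) : star e = e :=
  (h.eq_star (by rw [he.eq, he.eq]) (by rw [he.eq, he.eq])).symm

theorem star_mul (h : IsInverseStar star) (s t : S) : star (s * t) = star t * star s := by
  refine (h.eq_star ?_ ?_).symm
  · calc s * t * (star t * star s) * (s * t)
        = s * ((t * star t) * (star s * s)) * t := by simp only [mul_assoc]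
      _ = s * ((star s * s) * (t * star t)) * t := by
        rw [(h.idem_comm _ _ (h.isIdempotentElem_mul_star t) (h.isIdempotentElem_star_mul s)).eq]
      _ = (s * star s * s) * (t * star t * t) := by simp only [mul_assoc]
      _ = s * t := by rw [h.mul_star_mul, h.mul_star_mul]
  · calc star t * star s * (s * t) * (star t * star s)
        = star t * ((star s * s) * (t * star t)) * star s := by simp only [mul_assoc]
      _ = star t * ((t * star t) * (star s * s)) * star s := by
        rw [(h.idem_comm _ _ (h.isIdempotentElem_star_mul s) (h.isIdempotentElem_mul_star t)).eq]
      _ = (star t * t * star t) * (star s * s * star s) := by simp only [mul_assoc]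
      _ = star t * star s := by rw [h.star_mul_star, h.star_mul_star]

theorem eq_of_isIdempotentElem_mul_star (h : IsInverseStar star) {s t : S}
    (hst : star s * s = star t * t) (he : IsIdempotentElem (t * star s)) : s = t := by
  have hts : t * star s * s = t := by
    rw [mul_assoc, hst, ← mul_assoc, h.mul_star_mul]
  have hself : t * star s * t = s := by
    rw [← h.star_eq_self he, h.star_mul, h.star_star, mul_assoc, ← hst, ← mul_assoc,
      h.mul_star_mul]
  calc s = t * star s * (t * star s * s) := by rw [hts, hself]
    _ = t := by rw [← mul_assoc, he.eq, hts]

theorem mul_star_eq_mul_star_mul_mul_star (h : IsInverseStar star) {s t : S}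
    (hst : star s * s = star t * t) (u : S) : u * star s = u * star t * (t * star s) := by
  calc u * star s = u * (star s * s * star s) := by rw [h.star_mul_star]
    _ = u * star t * (t * star s) := by rw [hst]; simp only [mul_assoc]

theorem star_mul_self_mul_right (h : IsInverseStar star) {s t : S}
    (hst : star s * s = star t * t) (x : S) : star (s * x) * (s * x) = star (t * x) * (t * x) := by
  rw [h.star_mul, h.star_mul]
  calc star x * star s * (s * x) = star x * (star s * s) * x := by simp only [mul_assoc]
    _ = star x * star t * (t * x) := by rw [hst]; simp only [mul_assoc]

theorem mul_right_mul_star (h : IsInverseStar star) (s t x : S) :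
    t * x * star (s * x) = t * star s * (s * x * star (s * x)) := by
  rw [h.star_mul]
  calc t * x * (star x * star s) = t * x * (star x * (star s * s * star s)) := by
        rw [h.star_mul_star]
    _ = t * ((x * star x) * (star s * s)) * star s := by simp only [mul_assoc]
    _ = t * ((star s * s) * (x * star x)) * star s := by
        rw [(h.idem_comm _ _ (h.isIdempotentElem_mul_star x) (h.isIdempotentElem_star_mul s)).eq]
    _ = t * star s * (s * x * (star x * star s)) := by simp only [mul_assoc]

end IsInverseStar

section LengthDist

variable {S : Type*} [Semigroup S] {star : S → S} {l : S → ℝ≥0}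

variable (star l) in
open Classical in
noncomputable def lengthDist (s t : S) : ℝ≥0∞ :=
  if star s * s = star t * t then l (t * star s) else ⊤

theorem lengthDist_of_eq {s t : S} (h : star s * s = star t * t) :
    lengthDist star l s t = l (t * star s) :=
  if_pos h

theorem lengthDist_of_ne {s t : S} (h : star s * s ≠ star t * t) : lengthDist star l s t = ⊤ :=
  if_neg h

theorem lengthDist_eq_zero_iff (hS : IsInverseStar star)
    (hl0 : ∀ s, l s = 0 ↔ IsIdempotentElem s) (s t : S) : lengthDist star l s t = 0 ↔ s = t := by
  by_cases hst : star s * s = star t * t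
  · rw [lengthDist_of_eq hst, ENNReal.coe_eq_zero, hl0]
    exact ⟨hS.eq_of_isIdempotentElem_mul_star hst, fun h ↦ h ▸ hS.isIdempotentElem_mul_star s⟩
  · rw [lengthDist_of_ne hst]
    exact ⟨fun h ↦ absurd h ENNReal.top_ne_zero, fun h ↦ absurd (h ▸ rfl) hst⟩

theorem lengthDist_comm (hS : IsInverseStar star) (hlstar : ∀ s, l (star s) = l s) (s t : S) :
    lengthDist star l s t = lengthDist star l t s := by
  by_cases hst : star s * s = star t * t
  · rw [lengthDist_of_eq hst, lengthDist_of_eq hst.symm, ← hlstar (t * star s), hS.star_mul,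
      hS.star_star]
  · rw [lengthDist_of_ne hst, lengthDist_of_ne (Ne.symm hst)]

theorem lengthDist_triangle (hS : IsInverseStar star) (hlsub : ∀ s t, l (s * t) ≤ l s + l t)
    (s t u : S) : lengthDist star l s u ≤ lengthDist star l s t + lengthDist star l t u := by
  by_cases hst : star s * s = star t * t
  · by_cases htu : star t * t = star u * u
    · rw [lengthDist_of_eq (hst.trans htu), lengthDist_of_eq hst, lengthDist_of_eq htu,
        hS.mul_star_eq_mul_star_mul_mul_star hst, add_comm, ← ENNReal.coe_add,
        ENNReal.coe_le_coe]
      exact hlsub _ _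
    · simp [lengthDist_of_ne htu]
  · simp [lengthDist_of_ne hst]

theorem lengthDist_mul_right_le (hS : IsInverseStar star)
    (hl0 : ∀ s, l s = 0 ↔ IsIdempotentElem s) (hlsub : ∀ s t, l (s * t) ≤ l s + l t)
    (s t x : S) : lengthDist star l (s * x) (t * x) ≤ lengthDist star l s t := by
  by_cases hst : star s * s = star t * t
  · rw [lengthDist_of_eq (hS.star_mul_self_mul_right hst x), lengthDist_of_eq hst,
      ENNReal.coe_le_coe, hS.mul_right_mul_star]
    calc l (t * star s * (s * x * star (s * x)))
        ≤ l (t * star s) + l (s * x * star (s * x)) := hlsub _ _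
      _ = l (t * star s) := by rw [(hl0 _).2 (hS.isIdempotentElem_mul_star _), add_zero]
  · exact (lengthDist_of_ne hst).symm ▸ le_top

end LengthDist

/-- From a length function `l`, `d(s,t) := l(t s*)` if `s*s = t*t` (and `∞`
otherwise) defines a right subinvariant extended metric. -/
theorem stmt_9 {S : Type*} [Semigroup S] (star : S → S)
    (hinv : ∀ s : S, s * star s * s = s)
    (hinv2 : ∀ s : S, star s * s * star s = star s)
    (hcomm : ∀ e f : S, e * e = e → f * f = f → e * f = f * e)
    (l : S → ℝ≥0)
    (hl0 : ∀ s : S, l s = 0 ↔ s * s = s)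
    (hlstar : ∀ s : S, l (star s) = l s)
    (hlsub : ∀ s t : S, l (s * t) ≤ l s + l t)
    (d : S → S → ℝ≥0∞)
    (hd : ∀ s t : S, (star s * s = star t * t → d s t = (l (t * star s) : ℝ≥0∞)) ∧
      (star s * s ≠ star t * t → d s t = ⊤)) :
    (∀ s t : S, d s t = 0 ↔ s = t) ∧
    (∀ s t : S, d s t = d t s) ∧
    (∀ s t u : S, d s u ≤ d s t + d t u) ∧
    (∀ s t x : S, d (s * x) (t * x) ≤ d s t) := by
  have hS : IsInverseStar star := ⟨hinv, hinv2, hcomm⟩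
  obtain rfl : d = lengthDist star l := by
    funext s t
    by_cases hst : star s * s = star t * t
    · rw [(hd s t).1 hst, lengthDist_of_eq hst]
    · rw [(hd s t).2 hst, lengthDist_of_ne hst]
  exact ⟨lengthDist_eq_zero_iff hS hl0, lengthDist_comm hS hlstar, lengthDist_triangle hS hlsub,
    lengthDist_mul_right_le hS hl0 hlsub⟩
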